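/- arXiv:1809.09570 — 2 statements merged into one kernel-verified Lean document; each statement's English description precedes it below -/
import Mathlib

section
/- Let X and Y be operators on a finite-dimensional Banach space, h holomorphic on and inside a closed contour Γ with dist(Γ, spec(X)) ≥ R > 0, and assume β‖Y‖ < 1 where β = (DP/R)(1−(N/R)^D)/(1−N/R) bounds the resolvent of X on Γ, P = maxₖ‖Pₖ‖, N = maxₖ‖Nₖ‖. Suppose spec(X+Y) is also enclosed by Γ. Then ‖h(X+Y) − h(X)‖ ≤ M β²‖Y‖/(1 − β‖Y‖) with M = (1/2π)∮_Γ |h(z)| |dz|. -/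
/-!
Both Dunford–Taylor integrals run over the same contour, so their difference is the contour
integral of `h` against the difference of the resolvents of `X + Y` and `X`. Writing
`A = zI − X`, the Neumann series makes `A − Y` invertible, and the resolvent identity
`(A − Y)⁻¹ − A⁻¹ = (A − Y)⁻¹ Y A⁻¹` gives first `‖(A − Y)⁻¹‖ ≤ β / (1 − β‖Y‖)` and then the
uniform bound `β²‖Y‖ / (1 − β‖Y‖)` for that difference on the contour; the standard estimate
of a contour integral supplies the factor `M`.
-/

attribute [local instance] Matrix.linftyOpNormedAddCommGroup Matrix.linftyOpNormedRing
  Matrix.linftyOpNormedAlgebra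

open MeasureTheory
open scoped Ring

theorem inverse_sub_sub_inverse {R : Type*} [Ring R] {a y : R} (ha : IsUnit a)
    (hay : IsUnit (a - y)) : (a - y)⁻¹ʳ - a⁻¹ʳ = (a - y)⁻¹ʳ * y * a⁻¹ʳ := by
  rw [Ring.inverse_sub_inverse (iff_of_true hay ha), sub_sub_cancel]

section Resolvent

variable {R : Type*} [NormedRing R] [HasSummableGeomSeries R] {a y : R} {β : ℝ}

theorem isUnit_sub_of_norm_inverse_le (ha : IsUnit a) (hβ : ‖a⁻¹ʳ‖ ≤ β)
    (hβy : β * ‖y‖ < 1) : IsUnit (a - y) := by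
  have hsmall : ‖a⁻¹ʳ * y‖ < 1 :=
    (norm_mul_le _ _).trans_lt ((mul_le_mul_of_nonneg_right hβ (norm_nonneg y)).trans_lt hβy)
  have hfactor : a - y = a * (1 - a⁻¹ʳ * y) := by
    rw [mul_sub, mul_one, ← mul_assoc, Ring.mul_inverse_cancel a ha, one_mul]
  exact hfactor ▸ ha.mul (Units.oneSub _ hsmall).isUnit

theorem norm_inverse_sub_le (ha : IsUnit a) (hβ : ‖a⁻¹ʳ‖ ≤ β) (hβy : β * ‖y‖ < 1) :
    ‖(a - y)⁻¹ʳ‖ ≤ β / (1 - β * ‖y‖) := by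
  have hay : IsUnit (a - y) := isUnit_sub_of_norm_inverse_le ha hβ hβy
  have hrec : ‖(a - y)⁻¹ʳ‖ ≤ β + ‖(a - y)⁻¹ʳ‖ * ‖y‖ * β :=
    calc ‖(a - y)⁻¹ʳ‖ = ‖a⁻¹ʳ + (a - y)⁻¹ʳ * y * a⁻¹ʳ‖ := by
          rw [← inverse_sub_sub_inverse ha hay, add_sub_cancel]
      _ ≤ ‖a⁻¹ʳ‖ + ‖(a - y)⁻¹ʳ‖ * ‖y‖ * ‖a⁻¹ʳ‖ :=
          (norm_add_le _ _).trans (add_le_add le_rfl norm_mul₃_le)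
      _ ≤ β + ‖(a - y)⁻¹ʳ‖ * ‖y‖ * β := by gcongr
  rw [le_div_iff₀ (by linarith)]
  linarith

theorem norm_inverse_sub_sub_inverse_le (ha : IsUnit a) (hβ : ‖a⁻¹ʳ‖ ≤ β)
    (hβy : β * ‖y‖ < 1) : ‖(a - y)⁻¹ʳ - a⁻¹ʳ‖ ≤ β ^ 2 * ‖y‖ / (1 - β * ‖y‖) := by
  have hay : IsUnit (a - y) := isUnit_sub_of_norm_inverse_le ha hβ hβy
  calc ‖(a - y)⁻¹ʳ - a⁻¹ʳ‖ = ‖(a - y)⁻¹ʳ * y * a⁻¹ʳ‖ := by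
        rw [inverse_sub_sub_inverse ha hay]
    _ ≤ ‖(a - y)⁻¹ʳ‖ * ‖y‖ * ‖a⁻¹ʳ‖ := norm_mul₃_le
    _ ≤ β / (1 - β * ‖y‖) * ‖y‖ * β := by
        have hβ0 : 0 ≤ β := (norm_nonneg _).trans hβ
        gcongr
        exact norm_inverse_sub_le ha hβ hβy
    _ = β ^ 2 * ‖y‖ / (1 - β * ‖y‖) := by ring

end Resolvent

theorem norm_intervalIntegral_smul_le {E : Type*} [NormedAddCommGroup E] [NormedSpace ℂ E]
    {φ : ℝ → ℂ} {F : ℝ → E} {a b C : ℝ} (hab : a ≤ b)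
    (hφ : IntervalIntegrable (fun s => ‖φ s‖) volume a b)
    (hF : ∀ s ∈ Set.Ioc a b, ‖F s‖ ≤ C) :
    ‖∫ s in a..b, φ s • F s‖ ≤ (∫ s in a..b, ‖φ s‖) * C := by
  rw [← intervalIntegral.integral_mul_const]
  refine intervalIntegral.norm_integral_le_of_norm_le hab
    (Filter.Eventually.of_forall fun s hs => ?_) (hφ.mul_const C)
  rw [norm_smul]
  exact mul_le_mul_of_nonneg_left (hF s hs) (norm_nonneg _)

theorem matrix_function_perturbation_bound_general
    {n : Type*} [Fintype n] [DecidableEq n]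
    (X Y : Matrix n n ℂ) (h : ℂ → ℂ) (γ dγ : ℝ → ℂ) (β M : ℝ)
    (hXres : ∀ s ∈ Set.Icc (0:ℝ) 1, IsUnit (γ s • (1 : Matrix n n ℂ) - X))
    (hβ : ∀ s ∈ Set.Icc (0:ℝ) 1, ‖(γ s • (1 : Matrix n n ℂ) - X)⁻¹‖ ≤ β)
    (hβY : β * ‖Y‖ < 1)
    (hint0 : IntervalIntegrable (fun s => ‖h (γ s)‖ * ‖dγ s‖) volume 0 1)
    (hM : (2 * Real.pi)⁻¹ * (∫ s in (0:ℝ)..1, ‖h (γ s)‖ * ‖dγ s‖) ≤ M)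
    (hint1 : @IntervalIntegrable _ _ NormedAddCommGroup.toENormedAddCommMonoid.toENormedAddMonoid
      (fun s => (h (γ s) * dγ s) • (γ s • (1 : Matrix n n ℂ) - X)⁻¹) volume 0 1)
    (hint2 : @IntervalIntegrable _ _ NormedAddCommGroup.toENormedAddCommMonoid.toENormedAddMonoid
      (fun s => (h (γ s) * dγ s) • (γ s • (1 : Matrix n n ℂ) - (X + Y))⁻¹) volume 0 1) :
    ‖((2 * Real.pi * Complex.I)⁻¹ •
        ∫ s in (0:ℝ)..1, (h (γ s) * dγ s) • (γ s • (1 : Matrix n n ℂ) - (X + Y))⁻¹)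
      - ((2 * Real.pi * Complex.I)⁻¹ •
        ∫ s in (0:ℝ)..1, (h (γ s) * dγ s) • (γ s • (1 : Matrix n n ℂ) - X)⁻¹)‖
      ≤ M * (β ^ 2 * ‖Y‖) / (1 - β * ‖Y‖) := by
  have hres : ∀ s ∈ Set.Ioc (0:ℝ) 1, ‖(γ s • (1 : Matrix n n ℂ) - (X + Y))⁻¹
      - (γ s • (1 : Matrix n n ℂ) - X)⁻¹‖ ≤ β ^ 2 * ‖Y‖ / (1 - β * ‖Y‖) := by
    intro s hs'
    have hs := Set.Ioc_subset_Icc_self hs'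
    have hβs := hβ s hs
    rw [Matrix.nonsing_inv_eq_ringInverse] at hβs
    rw [← sub_sub, Matrix.nonsing_inv_eq_ringInverse, Matrix.nonsing_inv_eq_ringInverse]
    exact norm_inverse_sub_sub_inverse_le (hXres s hs) hβs hβY
  have hnorm : ‖(2 * Real.pi * Complex.I)⁻¹‖ = (2 * Real.pi)⁻¹ := by
    simp [abs_of_pos Real.pi_pos]
  rw [← smul_sub, ← intervalIntegral.integral_sub hint2 hint1, norm_smul, hnorm]
  simp_rw [← smul_sub]
  calc (2 * Real.pi)⁻¹ * ‖∫ s in (0:ℝ)..1, (h (γ s) * dγ s) •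
        ((γ s • (1 : Matrix n n ℂ) - (X + Y))⁻¹ - (γ s • (1 : Matrix n n ℂ) - X)⁻¹)‖
      ≤ (2 * Real.pi)⁻¹ *
          ((∫ s in (0:ℝ)..1, ‖h (γ s) * dγ s‖) * (β ^ 2 * ‖Y‖ / (1 - β * ‖Y‖))) := by
        gcongr
        exact norm_intervalIntegral_smul_le zero_le_one (by simpa only [norm_mul] using hint0) hres
    _ ≤ M * (β ^ 2 * ‖Y‖ / (1 - β * ‖Y‖)) := by
        rw [← mul_assoc]
        gcongr
        simpa only [norm_mul] using hM
    _ = M * (β ^ 2 * ‖Y‖) / (1 - β * ‖Y‖) := (mul_div_assoc _ _ _).symm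

/-- Quantitative perturbation bound for primary matrix functions (Lemma on matrix
function bounds): if the resolvent of `X` is bounded by `β` on the contour `γ`
(parametrized over `[0,1]` with derivative `dγ`), `β‖Y‖ < 1`, and
`M ≥ (1/2π)∮ |h(z)||dz|`, then the Dunford-Taylor integrals satisfy
`‖h(X+Y) − h(X)‖ ≤ M β² ‖Y‖/(1 − β‖Y‖)`. -/
theorem matrix_function_perturbation_bound
    {n : Type*} [Fintype n] [DecidableEq n]
    (X Y : Matrix n n ℂ) (h : ℂ → ℂ) (γ dγ : ℝ → ℂ) (β M : ℝ)
    (hγ : ∀ s ∈ Set.Icc (0:ℝ) 1, HasDerivAt γ (dγ s) s)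
    (hXres : ∀ s ∈ Set.Icc (0:ℝ) 1, IsUnit (γ s • (1 : Matrix n n ℂ) - X))
    (hβ : ∀ s ∈ Set.Icc (0:ℝ) 1, ‖(γ s • (1 : Matrix n n ℂ) - X)⁻¹‖ ≤ β)
    (hβY : β * ‖Y‖ < 1)
    (hint0 : IntervalIntegrable (fun s => ‖h (γ s)‖ * ‖dγ s‖) volume 0 1)
    (hM : (2 * Real.pi)⁻¹ * (∫ s in (0:ℝ)..1, ‖h (γ s)‖ * ‖dγ s‖) ≤ M)
    (hint1 : @IntervalIntegrable _ _ NormedAddCommGroup.toENormedAddCommMonoid.toENormedAddMonoid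
      (fun s => (h (γ s) * dγ s) • (γ s • (1 : Matrix n n ℂ) - X)⁻¹) volume 0 1)
    (hint2 : @IntervalIntegrable _ _ NormedAddCommGroup.toENormedAddCommMonoid.toENormedAddMonoid
      (fun s => (h (γ s) * dγ s) • (γ s • (1 : Matrix n n ℂ) - (X + Y))⁻¹) volume 0 1) :
    ‖((2 * Real.pi * Complex.I)⁻¹ •
        ∫ s in (0:ℝ)..1, (h (γ s) * dγ s) • (γ s • (1 : Matrix n n ℂ) - (X + Y))⁻¹)
      - ((2 * Real.pi * Complex.I)⁻¹ •
        ∫ s in (0:ℝ)..1, (h (γ s) * dγ s) • (γ s • (1 : Matrix n n ℂ) - X)⁻¹)‖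
      ≤ M * (β ^ 2 * ‖Y‖) / (1 - β * ‖Y‖) :=
  matrix_function_perturbation_bound_general X Y h γ dγ β M hXres hβ hβY hint0 hM hint1 hint2
end

section
/- Two-level weak-measurement Zeno model: let 𝓔 = (1−p)·id + p·𝓟 with 𝓟(ρ) = (ρ + XρX)/2 on 2×2 matrices (X the Pauli x matrix), 0 < p ≤ 1, and 𝓗 = [H, ·] with H = (Ω/2)Z (Z the Pauli z matrix). Then (𝓔 e^{−i(t/n)𝓗})^n → 𝓟 as n → ∞ (in any operator norm on the space of superoperators). -/
attribute [local instance] Matrix.frobeniusNormedAddCommGroup Matrix.frobeniusNormedRing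
  Matrix.frobeniusNormedAlgebra

open Matrix

/-!
The superoperator `𝓔 ∘ e^{-i(t/n)𝓗}` maps the pair of diagonal entries and the pair of
off-diagonal entries of `ρ` to themselves; on a pair `(u, v)` it applies the phases `e^{∓iθ}`
(`θ = 0` on the diagonal, `θ = tΩ/n` off it) and then mixes with weights `1 - p/2`, `p/2`, so
`max (|u|, |v|)` never grows. In the coordinates `u + v`, `u - v` one step is a rotation by `θ`
followed by damping of `u - v` by the factor `1 - p`. Hence after `k` steps
`u - v = O(|1 - p|^k + θ)`, while each step moves `u + v` by `O(θ² + θ |u - v|)`; over `n` steps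
with `θ = c/n` both errors are `O(1/n)`, leaving the average `(u + v)/2` in both slots, which is
exactly the action of `𝓟`.
-/

open Filter (Tendsto atTop)
open scoped Topology
open Complex

theorem ContinuousLinearMap.tendsto_of_tendsto_apply {𝕜 E F ι : Type*} [NontriviallyNormedField 𝕜]
    [CompleteSpace 𝕜] [NormedAddCommGroup E] [NormedSpace 𝕜 E] [FiniteDimensional 𝕜 E]
    [NormedAddCommGroup F] [NormedSpace 𝕜 F] {l : Filter ι} {T : ι → E →L[𝕜] F} {S : E →L[𝕜] F}
    (h : ∀ x, Tendsto (fun i ↦ T i x) l (𝓝 (S x))) : Tendsto T l (𝓝 S) := by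
  let v := Module.finBasis 𝕜 E
  rw [tendsto_iff_norm_sub_tendsto_zero]
  have hsum : Tendsto (fun i ↦ ∑ j, ‖(T i - S) (v j)‖) l (𝓝 0) := by
    simpa using tendsto_finsetSum _ fun j _ ↦ tendsto_iff_norm_sub_tendsto_zero.mp (h (v j))
  refine squeeze_zero (fun _ ↦ norm_nonneg _)
    (fun i ↦ v.opNorm_le (Finset.sum_nonneg fun _ _ ↦ norm_nonneg _) fun j ↦ ?_)
    (by simpa using hsum.const_mul _)
  exact Finset.single_le_sum (f := fun j ↦ ‖(T i - S) (v j)‖) (fun _ _ ↦ norm_nonneg _)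
    (Finset.mem_univ j)

lemma norm_convex_comb_mul_le {a b : ℝ} {e e' : ℂ} (ha : 0 ≤ a) (hb : 0 ≤ b) (hab : a + b = 1)
    (he : ‖e‖ = 1) (he' : ‖e'‖ = 1) (u v : ℂ) :
    ‖a * e * u + b * e' * v‖ ≤ max ‖u‖ ‖v‖ := by
  calc ‖a * e * u + b * e' * v‖ ≤ a * ‖u‖ + b * ‖v‖ := by
        refine (norm_add_le _ _).trans (le_of_eq ?_)
        simp [he, he', abs_of_nonneg ha, abs_of_nonneg hb]
    _ ≤ a * max ‖u‖ ‖v‖ + b * max ‖u‖ ‖v‖ := by gcongr <;> simp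
    _ = max ‖u‖ ‖v‖ := by rw [← add_mul, hab, one_mul]

lemma norm_fst_add_snd_le {E : Type*} [SeminormedAddCommGroup E] (z : E × E) :
    ‖z.1 + z.2‖ ≤ 2 * ‖z‖ := by
  linarith [norm_add_le z.1 z.2, norm_fst_le z, norm_snd_le z]

lemma abs_cos_sub_one_le (θ : ℝ) : |Real.cos θ - 1| ≤ θ ^ 2 / 2 := by
  rw [abs_sub_comm, abs_of_nonneg (sub_nonneg.mpr (Real.cos_le_one θ))]
  linarith [Real.one_sub_sq_div_two_le_cos (x := θ)]

lemma exp_neg_ofReal_mul_I (θ : ℝ) : exp (-(θ * I)) = Real.cos θ - Real.sin θ * I := by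
  rw [← neg_mul, ← ofReal_neg, exp_mul_I, ← ofReal_cos, ← ofReal_sin, Real.cos_neg,
    Real.sin_neg, ofReal_neg, neg_mul, sub_eq_add_neg]

lemma norm_cos_mul_sub_sin_mul_I_mul_le (θ : ℝ) (x y : ℂ) :
    ‖Real.cos θ * x - Real.sin θ * I * y‖ ≤ ‖x‖ + |θ| * ‖y‖ := by
  refine (norm_sub_le _ _).trans ?_
  simp only [norm_mul, norm_real, norm_I, Real.norm_eq_abs, mul_one]
  exact add_le_add (mul_le_of_le_one_left (norm_nonneg x) (Real.abs_cos_le_one θ))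
    (mul_le_mul_of_nonneg_right Real.abs_sin_le_abs (norm_nonneg y))

lemma norm_cos_mul_sub_sin_mul_I_mul_sub_le (θ : ℝ) (x y : ℂ) :
    ‖Real.cos θ * x - Real.sin θ * I * y - x‖ ≤ θ ^ 2 / 2 * ‖x‖ + |θ| * ‖y‖ := by
  rw [show (Real.cos θ : ℂ) * x - Real.sin θ * I * y - x
      = ((Real.cos θ - 1 : ℝ) : ℂ) * x - Real.sin θ * I * y by push_cast; ring]
  refine (norm_sub_le _ _).trans ?_
  simp only [norm_mul, norm_real, norm_I, Real.norm_eq_abs, mul_one]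
  exact add_le_add (mul_le_mul_of_nonneg_right (abs_cos_sub_one_le θ) (norm_nonneg x))
    (mul_le_mul_of_nonneg_right Real.abs_sin_le_abs (norm_nonneg y))

lemma le_pow_mul_add_div_of_le_mul_add {a : ℕ → ℝ} {r c : ℝ} (hr0 : 0 ≤ r) (hr1 : r < 1)
    (hc : 0 ≤ c) (h : ∀ k, a (k + 1) ≤ r * a k + c) (k : ℕ) :
    a k ≤ r ^ k * a 0 + c / (1 - r) := by
  have hr : 0 < 1 - r := by linarith
  induction k with
  | zero => simpa using div_nonneg hc hr.le
  | succ k ih =>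
    calc a (k + 1) ≤ r * (r ^ k * a 0 + c / (1 - r)) + c := (h k).trans (by gcongr)
      _ = r ^ (k + 1) * a 0 + c / (1 - r) := by field_simp; ring

/-- The action of `𝓔 ∘ e^{-i(t/n)𝓗}` on the off-diagonal entries `(ρ₀₁, ρ₁₀)` for `θ = tΩ/n`,
and on the diagonal entries `(ρ₀₀, ρ₁₁)` for `θ = 0`. -/
noncomputable def zenoStep (p θ : ℝ) (w : ℂ × ℂ) : ℂ × ℂ :=
  ((1 - p / 2) * exp (-(θ * I)) * w.1 + p / 2 * exp (θ * I) * w.2,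
    p / 2 * exp (-(θ * I)) * w.1 + (1 - p / 2) * exp (θ * I) * w.2)

section zenoStep

variable {p : ℝ}

lemma abs_one_sub_lt_one (hp0 : 0 < p) (hp2 : p < 2) : |1 - p| < 1 :=
  abs_sub_lt_iff.mpr ⟨by linarith, by linarith⟩

lemma norm_zenoStep_le (hp0 : 0 ≤ p) (hp2 : p ≤ 2) (θ : ℝ) (w : ℂ × ℂ) :
    ‖zenoStep p θ w‖ ≤ ‖w‖ := by
  have he : ‖exp (-(θ * I))‖ = 1 := by
    simpa using norm_exp_ofReal_mul_I (-θ)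
  have ha : 0 ≤ 1 - p / 2 := by linarith
  have hb : 0 ≤ p / 2 := by linarith
  rw [Prod.norm_def, Prod.norm_def, zenoStep]
  exact max_le
    (by exact_mod_cast norm_convex_comb_mul_le ha hb (by ring) he (norm_exp_ofReal_mul_I θ) w.1 w.2)
    (by exact_mod_cast norm_convex_comb_mul_le hb ha (by ring) he (norm_exp_ofReal_mul_I θ) w.1 w.2)

lemma norm_iterate_zenoStep_le (hp0 : 0 ≤ p) (hp2 : p ≤ 2) (θ : ℝ) (w : ℂ × ℂ) (k : ℕ) :
    ‖(zenoStep p θ)^[k] w‖ ≤ ‖w‖ := by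
  induction k with
  | zero => rfl
  | succ k ih =>
    rw [Function.iterate_succ_apply']
    exact (norm_zenoStep_le hp0 hp2 θ _).trans ih

lemma zenoStep_fst_add_snd (p θ : ℝ) (w : ℂ × ℂ) :
    (zenoStep p θ w).1 + (zenoStep p θ w).2 =
      Real.cos θ * (w.1 + w.2) - Real.sin θ * I * (w.1 - w.2) := by
  simp only [zenoStep, exp_neg_ofReal_mul_I, exp_mul_I, ← ofReal_cos, ← ofReal_sin]
  ring

lemma zenoStep_fst_sub_snd (p θ : ℝ) (w : ℂ × ℂ) :
    (zenoStep p θ w).1 - (zenoStep p θ w).2 =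
      (1 - p) * (Real.cos θ * (w.1 - w.2) - Real.sin θ * I * (w.1 + w.2)) := by
  simp only [zenoStep, exp_neg_ofReal_mul_I, exp_mul_I, ← ofReal_cos, ← ofReal_sin]
  ring

lemma norm_iterate_zenoStep_fst_sub_snd_le (hp0 : 0 < p) (hp2 : p < 2) (θ : ℝ) (w : ℂ × ℂ)
    (k : ℕ) :
    ‖((zenoStep p θ)^[k] w).1 - ((zenoStep p θ)^[k] w).2‖
      ≤ |1 - p| ^ k * ‖w.1 - w.2‖ + 2 * |θ| * ‖w‖ / (1 - |1 - p|) := by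
  have hq := abs_one_sub_lt_one hp0 hp2
  refine le_pow_mul_add_div_of_le_mul_add
    (a := fun k ↦ ‖((zenoStep p θ)^[k] w).1 - ((zenoStep p θ)^[k] w).2‖) (c := 2 * |θ| * ‖w‖)
    (abs_nonneg _) hq (by positivity) (fun k ↦ ?_) k
  set z := (zenoStep p θ)^[k] w
  have hz : ‖z.1 + z.2‖ ≤ 2 * ‖w‖ :=
    (norm_fst_add_snd_le z).trans (by gcongr; exact norm_iterate_zenoStep_le hp0.le hp2.le θ w k)
  rw [Function.iterate_succ_apply', zenoStep_fst_sub_snd, norm_mul, ← ofReal_one, ← ofReal_sub,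
    norm_real, Real.norm_eq_abs]
  calc |1 - p| * ‖Real.cos θ * (z.1 - z.2) - Real.sin θ * I * (z.1 + z.2)‖
      ≤ |1 - p| * (‖z.1 - z.2‖ + |θ| * (2 * ‖w‖)) := by
        gcongr
        exact (norm_cos_mul_sub_sin_mul_I_mul_le θ _ _).trans (by gcongr)
    _ ≤ |1 - p| * ‖z.1 - z.2‖ + 2 * |θ| * ‖w‖ := by
        have := mul_le_of_le_one_left (by positivity : 0 ≤ |θ| * (2 * ‖w‖)) hq.le
        linarith

lemma norm_iterate_zenoStep_fst_add_snd_sub_le (hp0 : 0 < p) (hp2 : p < 2) (θ : ℝ)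
    (w : ℂ × ℂ) (n : ℕ) :
    ‖((zenoStep p θ)^[n] w).1 + ((zenoStep p θ)^[n] w).2 - (w.1 + w.2)‖
      ≤ n * θ ^ 2 * (‖w‖ + 2 * ‖w‖ / (1 - |1 - p|)) + |θ| * ‖w.1 - w.2‖ / (1 - |1 - p|) := by
  set r := |1 - p|
  have hr : r < 1 := abs_one_sub_lt_one hp0 hp2
  set s : ℕ → ℂ := fun k ↦ ((zenoStep p θ)^[k] w).1 + ((zenoStep p θ)^[k] w).2
  set C := 2 * |θ| * ‖w‖ / (1 - r)
  have hstep : ∀ k, dist (s k) (s (k + 1)) ≤ θ ^ 2 * ‖w‖ + |θ| * (r ^ k * ‖w.1 - w.2‖ + C) := by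
    intro k
    have hs : ‖s k‖ ≤ 2 * ‖w‖ := (norm_fst_add_snd_le _).trans
      (by gcongr; exact norm_iterate_zenoStep_le hp0.le hp2.le θ w k)
    rw [dist_comm, dist_eq_norm]
    simp only [s, Function.iterate_succ_apply', zenoStep_fst_add_snd]
    refine (norm_cos_mul_sub_sin_mul_I_mul_sub_le θ _ _).trans ?_
    have hθs := mul_le_mul_of_nonneg_left hs (by positivity : 0 ≤ θ ^ 2 / 2)
    exact add_le_add (by linarith) (mul_le_mul_of_nonneg_left
      (norm_iterate_zenoStep_fst_sub_snd_le hp0 hp2 θ w k) (abs_nonneg θ))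
  have hgeom : ∑ k ∈ Finset.range n, r ^ k ≤ 1 / (1 - r) := by
    rw [Finset.range_eq_Ico]
    simpa using geom_sum_Ico_le_of_lt_one (m := 0) (n := n) (abs_nonneg (1 - p)) hr
  calc ‖s n - s 0‖ = dist (s 0) (s n) := by rw [dist_comm, dist_eq_norm]
    _ ≤ ∑ k ∈ Finset.range n, (θ ^ 2 * ‖w‖ + |θ| * (r ^ k * ‖w.1 - w.2‖ + C)) :=
        (dist_le_range_sum_dist s n).trans (Finset.sum_le_sum fun k _ ↦ hstep k)
    _ = n * (θ ^ 2 * ‖w‖) + |θ| * ‖w.1 - w.2‖ * ∑ k ∈ Finset.range n, r ^ k + n * (|θ| * C) := by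
        simp only [Finset.sum_add_distrib, mul_add, Finset.sum_const, Finset.card_range,
          nsmul_eq_mul, ← Finset.sum_mul, ← Finset.mul_sum]
        ring
    _ ≤ n * (θ ^ 2 * ‖w‖) + |θ| * ‖w.1 - w.2‖ * (1 / (1 - r)) + n * (|θ| * C) := by gcongr
    _ = n * θ ^ 2 * (‖w‖ + 2 * ‖w‖ / (1 - r)) + |θ| * ‖w.1 - w.2‖ / (1 - r) := by
        simp only [C]
        rw [← sq_abs θ]
        ring

theorem tendsto_iterate_zenoStep (hp0 : 0 < p) (hp2 : p < 2) (c : ℝ) (w : ℂ × ℂ) :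
    Tendsto (fun n : ℕ ↦ (zenoStep p (c / n))^[n] w) atTop
      (𝓝 ((w.1 + w.2) / 2, (w.1 + w.2) / 2)) := by
  set r := |1 - p|
  have hr : r < 1 := abs_one_sub_lt_one hp0 hp2
  set z : ℕ → ℂ × ℂ := fun n ↦ (zenoStep p (c / n))^[n] w
  have hθ : Tendsto (fun n : ℕ ↦ |c / n|) atTop (𝓝 0) := by
    simpa using (tendsto_const_div_atTop_nhds_zero_nat c).abs
  have hnθ : Tendsto (fun n : ℕ ↦ n * (c / n) ^ 2) atTop (𝓝 0) := by
    refine (tendsto_const_div_atTop_nhds_zero_nat (c ^ 2)).congr fun n ↦ ?_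
    rcases n.eq_zero_or_pos with rfl | hn
    · simp
    · field_simp
  have hsum : Tendsto (fun n ↦ (z n).1 + (z n).2) atTop (𝓝 (w.1 + w.2)) := by
    rw [tendsto_iff_norm_sub_tendsto_zero]
    refine squeeze_zero (fun _ ↦ norm_nonneg _)
      (fun n ↦ norm_iterate_zenoStep_fst_add_snd_sub_le hp0 hp2 (c / n) w n) ?_
    simpa [mul_assoc] using (hnθ.mul_const (‖w‖ + 2 * ‖w‖ / (1 - r))).add
      ((hθ.mul_const ‖w.1 - w.2‖).div_const (1 - r))
  have hdiff : Tendsto (fun n ↦ (z n).1 - (z n).2) atTop (𝓝 0) := by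
    refine squeeze_zero_norm (fun n ↦ norm_iterate_zenoStep_fst_sub_snd_le hp0 hp2 (c / n) w n) ?_
    simpa using ((tendsto_pow_atTop_nhds_zero_of_lt_one (abs_nonneg _) hr).mul_const
      ‖w.1 - w.2‖).add (((hθ.const_mul 2).mul_const ‖w‖).div_const (1 - r))
  have hz : ∀ n, z n = (((z n).1 + (z n).2 + ((z n).1 - (z n).2)) / 2,
      ((z n).1 + (z n).2 - ((z n).1 - (z n).2)) / 2) := fun n ↦ by ext <;> ring
  rw [funext hz]
  simpa using ((hsum.add hdiff).div_const 2).prodMk_nhds ((hsum.sub hdiff).div_const 2)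

end zenoStep

def Matrix.ofDiagOffDiag {α : Type*} (d o : α × α) : Matrix (Fin 2) (Fin 2) α :=
  !![d.1, o.1; o.2, d.2]

lemma Matrix.continuous_ofDiagOffDiag {α : Type*} [TopologicalSpace α] :
    Continuous (Function.uncurry (ofDiagOffDiag (α := α))) := by
  refine continuous_pi fun i ↦ continuous_pi fun j ↦ ?_
  fin_cases i <;> fin_cases j <;> simp [Function.uncurry_def, ofDiagOffDiag] <;> fun_prop

lemma exp_neg_smul_pauliZ_mul_mul_exp_smul (z a : ℂ) (ρ : Matrix (Fin 2) (Fin 2) ℂ) :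
    NormedSpace.exp ((-z) • (a • !![1, 0; 0, -1])) * ρ * NormedSpace.exp (z • (a • !![1, 0; 0, -1]))
      = ofDiagOffDiag (ρ 0 0, ρ 1 1) (exp (-(2 * z * a)) * ρ 0 1, exp (2 * z * a) * ρ 1 0) := by
  have hdiag : ∀ c : ℂ, c • (a • !![1, 0; 0, -1]) = diagonal ![c * a, -(c * a)] := by
    intro c
    ext i j
    fin_cases i <;> fin_cases j <;> simp
  rw [hdiag, hdiag, exp_diagonal, exp_diagonal, Pi.exp_def, Pi.exp_def, ← exp_eq_exp_ℂ]
  ext i j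
  fin_cases i <;> fin_cases j <;>
    simp [ofDiagOffDiag, mul_apply, Fin.sum_univ_two, exp_neg, two_mul, add_mul, exp_add] <;>
    field_simp

lemma pauliX_mul_mul_pauliX (σ : Matrix (Fin 2) (Fin 2) ℂ) :
    !![0, 1; 1, 0] * σ * !![0, 1; 1, 0] = !![σ 1 1, σ 1 0; σ 0 1, σ 0 0] := by
  ext i j
  fin_cases i <;> fin_cases j <;> simp [mul_apply, vecMul, dotProduct]

lemma twirl_eq_ofDiagOffDiag (σ : Matrix (Fin 2) (Fin 2) ℂ) :
    (2 : ℂ)⁻¹ • (σ + !![0, 1; 1, 0] * σ * !![0, 1; 1, 0]) =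
      ofDiagOffDiag ((σ 0 0 + σ 1 1) / 2, (σ 0 0 + σ 1 1) / 2)
        ((σ 0 1 + σ 1 0) / 2, (σ 0 1 + σ 1 0) / 2) := by
  rw [pauliX_mul_mul_pauliX]
  ext i j
  fin_cases i <;> fin_cases j <;> simp [ofDiagOffDiag] <;> ring

lemma weakMeasurement_eq_ofDiagOffDiag (p : ℝ) (σ : Matrix (Fin 2) (Fin 2) ℂ) :
    (1 - (p : ℂ)) • σ + (p : ℂ) • ((2 : ℂ)⁻¹ • (σ + !![0, 1; 1, 0] * σ * !![0, 1; 1, 0])) =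
      ofDiagOffDiag (zenoStep p 0 (σ 0 0, σ 1 1)) (zenoStep p 0 (σ 0 1, σ 1 0)) := by
  rw [pauliX_mul_mul_pauliX]
  ext i j
  fin_cases i <;> fin_cases j <;> simp [ofDiagOffDiag, zenoStep] <;> ring

lemma zenoStep_zero_phase (p θ : ℝ) (w : ℂ × ℂ) :
    zenoStep p 0 (exp (-(θ * I)) * w.1, exp (θ * I) * w.2) = zenoStep p θ w := by
  simp only [zenoStep, ofReal_zero, zero_mul, neg_zero, exp_zero, mul_one]
  ext <;> ring

theorem tendsto_pow_of_semiconj_zenoStep {p : ℝ} (hp0 : 0 < p) (hp2 : p < 2) (c : ℝ)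
    {T : ℕ → Matrix (Fin 2) (Fin 2) ℂ →L[ℂ] Matrix (Fin 2) (Fin 2) ℂ}
    {S : Matrix (Fin 2) (Fin 2) ℂ →L[ℂ] Matrix (Fin 2) (Fin 2) ℂ}
    (hT : ∀ n : ℕ, Function.Semiconj (Function.uncurry ofDiagOffDiag)
      (Prod.map (zenoStep p 0) (zenoStep p (c / n))) (T n))
    (hS : ∀ σ, S σ = (2 : ℂ)⁻¹ • (σ + !![0, 1; 1, 0] * σ * !![0, 1; 1, 0])) :
    Tendsto (fun n : ℕ ↦ T n ^ n) atTop (𝓝 S) := by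
  suffices h : ∀ ρ, Tendsto (fun n : ℕ ↦ (T n ^ n) ρ) atTop (𝓝 (S ρ)) from
    ContinuousLinearMap.tendsto_of_tendsto_apply h
  intro ρ
  have hρ : ρ = Function.uncurry ofDiagOffDiag ((ρ 0 0, ρ 1 1), (ρ 0 1, ρ 1 0)) :=
    ρ.eta_fin_two
  have hdiag := tendsto_iterate_zenoStep hp0 hp2 0 (ρ 0 0, ρ 1 1)
  simp only [zero_div] at hdiag
  rw [hS, twirl_eq_ofDiagOffDiag]
  simp_rw [pow_apply_eq_iterate]
  conv => enter [1, n]; rw [hρ, ← ((hT n).iterate_right n).eq, Prod.map_iterate]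
  exact continuous_ofDiagOffDiag.continuousAt.tendsto.comp
    (hdiag.prodMk_nhds (tendsto_iterate_zenoStep hp0 hp2 c (ρ 0 1, ρ 1 0)))

/-- Two-level weak-measurement Zeno model: with `𝓟(ρ) = (ρ + XρX)/2`,
`𝓔 = (1−p)·id + p·𝓟` (`0 < p ≤ 1`) and the unitary evolution generated by
`H = (Ω/2)Z`, frequent weak measurements induce the Zeno limit
`(𝓔 e^{−i(t/n)𝓗})^n → 𝓟` as `n → ∞`. -/
theorem two_level_weak_measurement_zeno
    (Ω t p : ℝ) (hp0 : 0 < p) (hp1 : p ≤ 1)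
    (𝓟 𝓔 : Matrix (Fin 2) (Fin 2) ℂ →L[ℂ] Matrix (Fin 2) (Fin 2) ℂ)
    (U : ℕ → Matrix (Fin 2) (Fin 2) ℂ →L[ℂ] Matrix (Fin 2) (Fin 2) ℂ)
    (h𝓟 : ∀ ρ, 𝓟 ρ = (2 : ℂ)⁻¹ • (ρ + !![0, 1; 1, 0] * ρ * !![0, 1; 1, 0]))
    (h𝓔 : ∀ ρ, 𝓔 ρ = (1 - (p : ℂ)) • ρ + (p : ℂ) • 𝓟 ρ)
    (hU : ∀ (n : ℕ) (ρ : Matrix (Fin 2) (Fin 2) ℂ), U n ρ =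
      NormedSpace.exp ((-(Complex.I * t / n)) • (((Ω : ℂ) / 2) • !![1, 0; 0, -1])) * ρ *
      NormedSpace.exp ((Complex.I * t / n) • (((Ω : ℂ) / 2) • !![1, 0; 0, -1]))) :
    Filter.Tendsto (fun n : ℕ => (𝓔.comp (U n)) ^ n) Filter.atTop (nhds 𝓟) := by
  refine tendsto_pow_of_semiconj_zenoStep hp0 (by linarith) (t * Ω) (fun n ↦ ?_) h𝓟
  rintro ⟨d, o⟩
  have hphase : 2 * (I * t / n) * (Ω / 2 : ℂ) = ((t * Ω / n : ℝ) : ℂ) * I := by push_cast; ring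
  rw [ContinuousLinearMap.comp_apply, hU, exp_neg_smul_pauliZ_mul_mul_exp_smul, hphase, h𝓔, h𝓟,
    weakMeasurement_eq_ofDiagOffDiag, Function.uncurry_apply_pair, Prod.map_apply,
    ← zenoStep_zero_phase p (t * Ω / n) o]
  rfl
end
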